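/- Let α ∈ (0,1), H ≥ 0, and set h(x) = (√(1−α)/√(H²+1)) tanh x. Then the function f(x) = (1/(2(H²+1))) [1 − h(x)·arctanh(h(x))] satisfies the ODE f''(x) + (2/cosh²x) f(x) = (H²+α) cosh²x / ((H²+α)cosh²x + 1−α)² for all x ∈ ℝ. -/

import Mathlib

/-!
Substituting `t = tanh x` turns `f'' + 2 sech² x · f` into `sech² x` times the degree-one
Legendre operator `(1 - t²) Q'' - 2 t Q' + 2 Q`, where `f = Q ∘ tanh` and
`Q t = c (1 - k t · artanh (k t))` with `k = √(1 - α) / √(H² + 1)`, `c = 1 / (2 (H² + 1))`.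
For `k = 1`, `Q = -c Q₁` lies in the kernel; for general `k` the `artanh` terms still cancel,
leaving `2 c (1 - k²) / (1 - k² t²)²`, which is the right-hand side written in terms of `cosh x`.
-/

/-- The inverse hyperbolic tangent. -/
noncomputable def artanh (x : ℝ) : ℝ := Real.log ((1 + x) / (1 - x)) / 2

open Set

theorem Real.hasDerivAt_tanh (x : ℝ) : HasDerivAt Real.tanh (1 - Real.tanh x ^ 2) x := by
  have h := (Real.hasDerivAt_sinh x).div (Real.hasDerivAt_cosh x) (Real.cosh_pos x).ne'
  rw [show Real.tanh = Real.sinh / Real.cosh from funext Real.tanh_eq_sinh_div_cosh]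
  refine h.congr_deriv ?_
  rw [Pi.div_apply]
  field_simp

theorem Real.one_sub_tanh_sq (x : ℝ) : 1 - Real.tanh x ^ 2 = 1 / Real.cosh x ^ 2 := by
  rw [Real.tanh_eq_sinh_div_cosh]
  field_simp
  linear_combination Real.cosh_sq_sub_sinh_sq x

theorem hasDerivAt_artanh {x : ℝ} (hx : x ^ 2 < 1) : HasDerivAt artanh (1 - x ^ 2)⁻¹ x := by
  have hp : 0 < 1 + x := by nlinarith
  have hm : 0 < 1 - x := by nlinarith
  have hsq : 1 - x ^ 2 ≠ 0 := by nlinarith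
  have h : HasDerivAt artanh _ x := ((((hasDerivAt_id x).const_add 1).div
    ((hasDerivAt_id x).const_sub 1) hm.ne').log (div_pos hp hm).ne').div_const 2
  refine h.congr_deriv ?_
  simp only [id, Pi.div_apply]
  field_simp
  ring

theorem hasDerivAt_mul_artanh_mul {k t : ℝ} (h : (k * t) ^ 2 < 1) :
    HasDerivAt (fun t => k * t * artanh (k * t))
      (k * (artanh (k * t) + k * t / (1 - (k * t) ^ 2))) t := by
  have hkt : HasDerivAt (fun t => k * t) k t := by simpa using (hasDerivAt_id t).const_mul k
  refine (hkt.mul ((hasDerivAt_artanh h).comp t hkt)).congr_deriv ?_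
  simp only [Function.comp_apply]
  field_simp [(by nlinarith : 1 - k ^ 2 * t ^ 2 ≠ 0)]

theorem hasDerivAt_mul_artanh_mul_add_div {k t : ℝ} (h : (k * t) ^ 2 < 1) :
    HasDerivAt (fun t => k * (artanh (k * t) + k * t / (1 - (k * t) ^ 2)))
      (2 * k ^ 2 / (1 - (k * t) ^ 2) ^ 2) t := by
  have hkt : HasDerivAt (fun t => k * t) k t := by simpa using (hasDerivAt_id t).const_mul k
  refine (((hasDerivAt_artanh h).comp t hkt).add
    (hkt.div ((hkt.fun_pow 2).const_sub 1) (by nlinarith))).const_mul k |>.congr_deriv ?_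
  field_simp [(by nlinarith : 1 - k ^ 2 * t ^ 2 ≠ 0)]
  ring

theorem deriv_deriv_comp_tanh_add {Q Q' Q'' : ℝ → ℝ}
    (hQ : ∀ t ∈ Ioo (-1 : ℝ) 1, HasDerivAt Q (Q' t) t)
    (hQ' : ∀ t ∈ Ioo (-1 : ℝ) 1, HasDerivAt Q' (Q'' t) t) (x : ℝ) :
    deriv (deriv (Q ∘ Real.tanh)) x + 2 / Real.cosh x ^ 2 * Q (Real.tanh x) =
      (1 - Real.tanh x ^ 2) * ((1 - Real.tanh x ^ 2) * Q'' (Real.tanh x)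
        - 2 * Real.tanh x * Q' (Real.tanh x) + 2 * Q (Real.tanh x)) := by
  have hmem (y : ℝ) : Real.tanh y ∈ Ioo (-1 : ℝ) 1 :=
    ⟨Real.neg_one_lt_tanh y, Real.tanh_lt_one y⟩
  have hd : deriv (Q ∘ Real.tanh) = fun y => Q' (Real.tanh y) * (1 - Real.tanh y ^ 2) :=
    funext fun y => ((hQ _ (hmem y)).comp y (Real.hasDerivAt_tanh y)).deriv
  have hdd : HasDerivAt (fun y => Q' (Real.tanh y) * (1 - Real.tanh y ^ 2)) _ x :=
    ((hQ' _ (hmem x)).comp x (Real.hasDerivAt_tanh x)).fun_mul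
      (((Real.hasDerivAt_tanh x).pow 2).const_sub 1)
  rw [hd, hdd.deriv, div_eq_mul_one_div, ← Real.one_sub_tanh_sq]
  simp only [Function.comp_apply]
  ring

theorem legendre_one_sub_mul_artanh (c k t : ℝ) (h : 1 - (k * t) ^ 2 ≠ 0) :
    (1 - t ^ 2) * (c * -(2 * k ^ 2 / (1 - (k * t) ^ 2) ^ 2))
      - 2 * t * (c * -(k * (artanh (k * t) + k * t / (1 - (k * t) ^ 2))))
      + 2 * (c * (1 - k * t * artanh (k * t)))
      = 2 * c * ((1 - k ^ 2) / (1 - (k * t) ^ 2) ^ 2) := by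
  generalize artanh (k * t) = A
  generalize hD : 1 - (k * t) ^ 2 = D at h ⊢
  field_simp
  linear_combination (-c * (1 + D)) * hD

theorem one_sub_tanh_sq_mul_div_sq {k : ℝ} (hk : k ^ 2 ≤ 1) (x : ℝ) :
    (1 - Real.tanh x ^ 2) * ((1 - k ^ 2) / (1 - k ^ 2 * Real.tanh x ^ 2) ^ 2)
      = (1 - k ^ 2) * Real.cosh x ^ 2 / ((1 - k ^ 2) * Real.cosh x ^ 2 + k ^ 2) ^ 2 := by
  have hc : 1 ≤ Real.cosh x ^ 2 := by nlinarith [Real.one_le_cosh x]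
  have hN : 0 < (1 - k ^ 2) * Real.cosh x ^ 2 + k ^ 2 := by nlinarith
  rw [show Real.tanh x ^ 2 = 1 - 1 / Real.cosh x ^ 2 by rw [← Real.one_sub_tanh_sq]; ring]
  field_simp
  ring

theorem stmt8_general (α H : ℝ) (hα0 : 0 < α) (hα1 : α < 1)
    (h f : ℝ → ℝ)
    (hh : ∀ x, h x = Real.sqrt (1 - α) / Real.sqrt (H ^ 2 + 1) * Real.tanh x)
    (hf : ∀ x, f x = 1 / (2 * (H ^ 2 + 1)) * (1 - h x * artanh (h x)))
    (x : ℝ) :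
    deriv (deriv f) x + 2 / Real.cosh x ^ 2 * f x
      = (H ^ 2 + α) * Real.cosh x ^ 2
        / ((H ^ 2 + α) * Real.cosh x ^ 2 + 1 - α) ^ 2 := by
  set k := Real.sqrt (1 - α) / Real.sqrt (H ^ 2 + 1)
  have hH : 0 < H ^ 2 + 1 := by positivity
  have hk : k ^ 2 = (1 - α) / (H ^ 2 + 1) := by
    rw [div_pow, Real.sq_sqrt (by linarith), Real.sq_sqrt hH.le]
  have hk1 : k ^ 2 < 1 := by
    rw [hk, div_lt_one hH]
    nlinarith [sq_nonneg H]
  have hkt (t : ℝ) (ht : t ∈ Ioo (-1 : ℝ) 1) : (k * t) ^ 2 < 1 := by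
    rw [mul_pow]
    exact mul_lt_one_of_nonneg_of_lt_one_left (sq_nonneg k) hk1 (by nlinarith [ht.1, ht.2])
  have hD : 1 - (k * Real.tanh x) ^ 2 ≠ 0 :=
    (sub_pos.mpr (hkt _ ⟨Real.neg_one_lt_tanh x, Real.tanh_lt_one x⟩)).ne'
  have hfQ : f = (fun t => 1 / (2 * (H ^ 2 + 1)) * (1 - k * t * artanh (k * t))) ∘ Real.tanh :=
    funext fun y => by simp only [Function.comp_apply, hf, hh, mul_assoc]
  rw [hfQ, Function.comp_apply, deriv_deriv_comp_tanh_add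
      (fun t ht => ((hasDerivAt_mul_artanh_mul (hkt t ht)).const_sub 1).const_mul _)
      (fun t ht => (hasDerivAt_mul_artanh_mul_add_div (hkt t ht)).neg.const_mul _),
    legendre_one_sub_mul_artanh _ _ _ hD, mul_pow, mul_left_comm,
    one_sub_tanh_sq_mul_div_sq hk1.le, hk]
  have hcosh : 1 ≤ Real.cosh x ^ 2 := by nlinarith [Real.one_le_cosh x]
  have hden : 0 < (H ^ 2 + α) * Real.cosh x ^ 2 + 1 - α := by nlinarith [sq_nonneg H]
  field_simp
  ring

theorem stmt8 (α H : ℝ) (hα0 : 0 < α) (hα1 : α < 1) (hH : 0 ≤ H)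
    (h f : ℝ → ℝ)
    (hh : ∀ x, h x = Real.sqrt (1 - α) / Real.sqrt (H ^ 2 + 1) * Real.tanh x)
    (hf : ∀ x, f x = 1 / (2 * (H ^ 2 + 1)) * (1 - h x * artanh (h x)))
    (x : ℝ) :
    deriv (deriv f) x + 2 / Real.cosh x ^ 2 * f x
      = (H ^ 2 + α) * Real.cosh x ^ 2
        / ((H ^ 2 + α) * Real.cosh x ^ 2 + 1 - α) ^ 2 :=
  stmt8_general α H hα0 hα1 h f hh hf x
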